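/- Let k₁, k₂ ≥ 0 with k₂² < 2k₁, set μ₁ = √(√(2k₁) + k₂) and μ₂ = √(√(2k₁) − k₂), and define s₀(t) = μ₂²·sinh²(μ₁t/√2) − μ₁²·sin²(μ₂t/√2), s₁(t) = 2√k₁·μ₁μ₂(μ₁·sin(μ₂t/√2)·cos(μ₂t/√2) + μ₂·cosh(μ₁t/√2)·sinh(μ₁t/√2)), s₂(t) = √(2k₁)·(μ₁²·sin²(μ₂t/√2) + μ₂²·sinh²(μ₁t/√2)). Let K = [[k₁ I, 0],[0, k₂ I]]. Then S(t) = ½·[[−(s₁(t)/s₀(t)) I, (s₂(t)/s₀(t)) I],[(s₂(t)/s₀(t)) I, −(s₀'(t)/s₀(t)) I]] solves the matrix Riccati equation S'(t) = S(t)C + Cᵀ S(t) + S(t) D S(t) − K on every interval of (0,∞) where s₀ does not vanish, and S(t)⁻¹ → 0 as t → 0⁺. -/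

import Mathlib

noncomputable section
open Real Set Matrix Filter

/-- The `2n × 2n` matrix `C = [[0, −I], [0, 0]]` in `n × n` block form. -/
def Cmat (n : ℕ) : Matrix (Fin n ⊕ Fin n) (Fin n ⊕ Fin n) ℝ :=
  Matrix.fromBlocks 0 (-1) 0 0

/-- The `2n × 2n` matrix `D = [[0, 0], [0, 2I]]` in `n × n` block form. -/
def Dmat (n : ℕ) : Matrix (Fin n ⊕ Fin n) (Fin n ⊕ Fin n) ℝ :=
  Matrix.fromBlocks 0 0 0 ((2 : ℝ) • 1)

/-- The block-diagonal matrix `[[a·I, 0], [0, b·I]]`. -/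
def blockDiag (n : ℕ) (a b : ℝ) : Matrix (Fin n ⊕ Fin n) (Fin n ⊕ Fin n) ℝ :=
  Matrix.fromBlocks (a • 1) 0 0 (b • 1)

/-- The matrix `½·[[-(s₁/s₀)I, (s₂/s₀)I], [(s₂/s₀)I, -(s₀'/s₀)I]]`. -/
def harnackMatrix (n : ℕ) (s₀ s₁ s₂ : ℝ → ℝ) (t : ℝ) :
    Matrix (Fin n ⊕ Fin n) (Fin n ⊕ Fin n) ℝ :=
  (1/2 : ℝ) • Matrix.fromBlocks (-(s₁ t / s₀ t) • 1) ((s₂ t / s₀ t) • 1)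
    ((s₂ t / s₀ t) • 1) (-(deriv s₀ t / s₀ t) • 1)

/-- `μ₁ = √(√(2k₁) + k₂)`. -/
def mu1 (k₁ k₂ : ℝ) : ℝ := Real.sqrt (Real.sqrt (2 * k₁) + k₂)

/-- `μ₂ = √(√(2k₁) − k₂)`. -/
def mu2 (k₁ k₂ : ℝ) : ℝ := Real.sqrt (Real.sqrt (2 * k₁) - k₂)

/-- `s₀` in the case `k₂² < 2k₁`. -/
def s0C (k₁ k₂ t : ℝ) : ℝ :=
  (mu2 k₁ k₂) ^ 2 * Real.sinh (mu1 k₁ k₂ / Real.sqrt 2 * t) ^ 2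
    - (mu1 k₁ k₂) ^ 2 * Real.sin (mu2 k₁ k₂ / Real.sqrt 2 * t) ^ 2

/-- `s₁` in the case `k₂² < 2k₁`. -/
def s1C (k₁ k₂ t : ℝ) : ℝ :=
  2 * Real.sqrt k₁ * mu1 k₁ k₂ * mu2 k₁ k₂ *
    (mu1 k₁ k₂ * Real.sin (mu2 k₁ k₂ / Real.sqrt 2 * t) * Real.cos (mu2 k₁ k₂ / Real.sqrt 2 * t)
      + mu2 k₁ k₂ * Real.cosh (mu1 k₁ k₂ / Real.sqrt 2 * t) *
          Real.sinh (mu1 k₁ k₂ / Real.sqrt 2 * t))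

/-- `s₂` in the case `k₂² < 2k₁`. -/
def s2C (k₁ k₂ t : ℝ) : ℝ :=
  Real.sqrt (2 * k₁) *
    ((mu1 k₁ k₂) ^ 2 * Real.sin (mu2 k₁ k₂ / Real.sqrt 2 * t) ^ 2
      + (mu2 k₁ k₂) ^ 2 * Real.sinh (mu1 k₁ k₂ / Real.sqrt 2 * t) ^ 2)

/-!
With `α = μ₁/√2` and `β = μ₂/√2` one has `α² + β² = √(2k₁)` and `α² − β² = k₂`, and `s₀, s₁, s₂`
become trigonometric–hyperbolic polynomials in `α, β`.
For `S = [[x, y], [y, z]] ⊗ I` the Riccati equation is the scalar system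
`x' = 2y² − k₁`, `y' = 2yz − x`, `z' = 2z² − 2y − k₂`; for `x = −s₁/2s₀`, `y = s₂/2s₀`,
`z = −s₀'/2s₀` it amounts to `s₂' = s₁`, `s₀'' = 2s₂ + 2k₂s₀` and
`s₁s₀' − s₁'s₀ = s₂² − 2k₁s₀²`, which follow from `cosh² = 1 + sinh²` and `cos² = 1 − sin²`.
The inverse of `S` is `−2s₀/(s₁s₀' − s₂²) · [[s₀', s₂], [s₂, s₁]] ⊗ I`, and
`s₁s₀' − s₂² = √(2k₁) s₀ w` with `w(0) = 8α²β² ≠ 0`; so near `0⁺` the inverse is a continuous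
function of `t` vanishing at `t = 0`, where `s₀', s₁, s₂` all vanish.
-/
theorem hasDerivAt_fromBlocks_smul_one_apply {m : Type*} [DecidableEq m] {a b c d : ℝ → ℝ}
    {a' b' c' d' t : ℝ} (ha : HasDerivAt a a' t) (hb : HasDerivAt b b' t)
    (hc : HasDerivAt c c' t) (hd : HasDerivAt d d' t) (i j : m ⊕ m) :
    HasDerivAt (fun τ => fromBlocks (a τ • 1 : Matrix m m ℝ) (b τ • 1) (c τ • 1) (d τ • 1) i j)
      (fromBlocks (a' • 1 : Matrix m m ℝ) (b' • 1) (c' • 1) (d' • 1) i j) t := by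
  rcases i with i | i <;> rcases j with j | j <;>
    simp only [fromBlocks_apply₁₁, fromBlocks_apply₁₂, fromBlocks_apply₂₁, fromBlocks_apply₂₂,
      Matrix.smul_apply, smul_eq_mul]
  exacts [ha.mul_const _, hb.mul_const _, hc.mul_const _, hd.mul_const _]

theorem riccati_fromBlocks_smul_one (n : ℕ) (x y z k₁ k₂ : ℝ) :
    let S : Matrix (Fin n ⊕ Fin n) (Fin n ⊕ Fin n) ℝ := fromBlocks (x • 1) (y • 1) (y • 1) (z • 1)
    S * Cmat n + (Cmat n)ᵀ * S + S * Dmat n * S - blockDiag n k₁ k₂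
      = fromBlocks ((2 * y ^ 2 - k₁) • 1) ((2 * y * z - x) • 1) ((2 * y * z - x) • 1)
          ((2 * z ^ 2 - 2 * y - k₂) • 1) := by
  simp only [Cmat, Dmat, _root_.blockDiag, fromBlocks_transpose, transpose_zero, transpose_neg,
    transpose_one, fromBlocks_multiply, sub_eq_add_neg, fromBlocks_neg, fromBlocks_add,
    Matrix.mul_zero, Matrix.mul_one, Matrix.mul_neg, Matrix.mul_smul, smul_smul]
  congr 1 <;> module

theorem harnackMatrix_eq (n : ℕ) (s₀ s₁ s₂ : ℝ → ℝ) :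
    harnackMatrix n s₀ s₁ s₂ = fun t => fromBlocks ((-(s₁ t / s₀ t) / 2) • 1)
      ((s₂ t / s₀ t / 2) • 1) ((s₂ t / s₀ t / 2) • 1) ((-(deriv s₀ t / s₀ t) / 2) • 1) := by
  ext t : 1
  simp only [harnackMatrix, fromBlocks_smul, smul_smul]
  congr 1 <;> ring_nf

theorem harnackMatrix_inv (n : ℕ) {s₀ s₁ s₂ : ℝ → ℝ} {t : ℝ} (h₀ : s₀ t ≠ 0)
    (hdet : s₁ t * deriv s₀ t - s₂ t ^ 2 ≠ 0) :
    (harnackMatrix n s₀ s₁ s₂ t)⁻¹ = (-2 * s₀ t / (s₁ t * deriv s₀ t - s₂ t ^ 2)) •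
      fromBlocks (deriv s₀ t • 1) (s₂ t • 1) (s₂ t • 1) (s₁ t • 1) := by
  refine inv_eq_right_inv ?_
  rw [harnackMatrix_eq, Matrix.mul_smul, fromBlocks_multiply, ← fromBlocks_one, fromBlocks_smul]
  simp only [Matrix.smul_mul, Matrix.mul_smul, Matrix.one_mul, smul_smul, ← add_smul]
  congr 1
  all_goals match_scalars; field_simp; ring

theorem harnackMatrix_hasDerivAt_riccati (n : ℕ) {s₀ s₁ s₂ : ℝ → ℝ} {k₁ k₂ s₁' t : ℝ}
    (hs₀ : s₀ t ≠ 0) (h₀ : DifferentiableAt ℝ s₀ t)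
    (h₀' : HasDerivAt (deriv s₀) (2 * s₂ t + 2 * k₂ * s₀ t) t)
    (h₁ : HasDerivAt s₁ s₁' t) (h₂ : HasDerivAt s₂ (s₁ t) t)
    (hwronskian : s₁ t * deriv s₀ t - s₁' * s₀ t = s₂ t ^ 2 - 2 * k₁ * s₀ t ^ 2)
    (i j : Fin n ⊕ Fin n) :
    HasDerivAt (fun τ => harnackMatrix n s₀ s₁ s₂ τ i j)
      ((harnackMatrix n s₀ s₁ s₂ t * Cmat n + (Cmat n)ᵀ * harnackMatrix n s₀ s₁ s₂ t
        + harnackMatrix n s₀ s₁ s₂ t * Dmat n * harnackMatrix n s₀ s₁ s₂ t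
        - blockDiag n k₁ k₂) i j) t := by
  rw [harnackMatrix_eq, riccati_fromBlocks_smul_one]
  apply hasDerivAt_fromBlocks_smul_one_apply
  · refine ((h₁.div h₀.hasDerivAt hs₀).neg.div_const 2).congr_deriv ?_
    field_simp
    linear_combination hwronskian
  · refine ((h₂.div h₀.hasDerivAt hs₀).div_const 2).congr_deriv ?_
    field_simp
    ring
  · refine ((h₂.div h₀.hasDerivAt hs₀).div_const 2).congr_deriv ?_
    field_simp
    ring
  · refine ((h₀'.div h₀.hasDerivAt hs₀).neg.div_const 2).congr_deriv ?_
    field_simp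
    ring

def riccatiS₀ (α β t : ℝ) : ℝ := 2 * (β ^ 2 * sinh (α * t) ^ 2 - α ^ 2 * sin (β * t) ^ 2)

def riccatiS₀Deriv (α β t : ℝ) : ℝ :=
  4 * α * β * (β * sinh (α * t) * cosh (α * t) - α * sin (β * t) * cos (β * t))

def riccatiS₁ (α β t : ℝ) : ℝ :=
  4 * (α ^ 2 + β ^ 2) * α * β * (α * sin (β * t) * cos (β * t) + β * cosh (α * t) * sinh (α * t))

def riccatiS₂ (α β t : ℝ) : ℝ :=
  2 * (α ^ 2 + β ^ 2) * (α ^ 2 * sin (β * t) ^ 2 + β ^ 2 * sinh (α * t) ^ 2)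

def riccatiW (α β t : ℝ) : ℝ :=
  4 * α ^ 2 * β ^ 2 * (2 + sinh (α * t) ^ 2 - sin (β * t) ^ 2)
    + 2 * (α ^ 2 - β ^ 2) * (α ^ 2 * sin (β * t) ^ 2 + β ^ 2 * sinh (α * t) ^ 2)

section RiccatiModel

variable (α β t : ℝ)

theorem hasDerivAt_riccatiS₀ : HasDerivAt (riccatiS₀ α β) (riccatiS₀Deriv α β t) t := by
  have hsh := (hasDerivAt_const_mul (x := t) α).sinh
  have hs := (hasDerivAt_const_mul (x := t) β).sin
  refine (((hsh.pow 2).const_mul (β ^ 2)).sub ((hs.pow 2).const_mul (α ^ 2))).const_mul 2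
    |>.congr_deriv ?_
  rw [riccatiS₀Deriv]
  ring

theorem deriv_riccatiS₀ : deriv (riccatiS₀ α β) = riccatiS₀Deriv α β :=
  funext fun t => (hasDerivAt_riccatiS₀ α β t).deriv

theorem hasDerivAt_riccatiS₀Deriv :
    HasDerivAt (riccatiS₀Deriv α β)
      (2 * riccatiS₂ α β t + 2 * (α ^ 2 - β ^ 2) * riccatiS₀ α β t) t := by
  have hsh := (hasDerivAt_const_mul (x := t) α).sinh
  have hch := (hasDerivAt_const_mul (x := t) α).cosh
  have hs := (hasDerivAt_const_mul (x := t) β).sin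
  have hc := (hasDerivAt_const_mul (x := t) β).cos
  refine ((((hsh.const_mul β).mul hch).sub ((hs.const_mul α).mul hc)).const_mul (4 * α * β))
    |>.congr_deriv ?_
  rw [riccatiS₂, riccatiS₀]
  linear_combination (4 * α ^ 2 * β ^ 2) * cosh_sq (α * t) - (4 * α ^ 2 * β ^ 2) * cos_sq' (β * t)

theorem hasDerivAt_riccatiS₁ :
    HasDerivAt (riccatiS₁ α β)
      (8 * (α ^ 2 + β ^ 2) * α ^ 2 * β ^ 2 * (1 + sinh (α * t) ^ 2 - sin (β * t) ^ 2)) t := by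
  have hsh := (hasDerivAt_const_mul (x := t) α).sinh
  have hch := (hasDerivAt_const_mul (x := t) α).cosh
  have hs := (hasDerivAt_const_mul (x := t) β).sin
  have hc := (hasDerivAt_const_mul (x := t) β).cos
  refine ((((hs.const_mul α).mul hc).add ((hch.const_mul β).mul hsh)).const_mul
    (4 * (α ^ 2 + β ^ 2) * α * β)) |>.congr_deriv ?_
  linear_combination (4 * (α ^ 2 + β ^ 2) * α ^ 2 * β ^ 2) * cosh_sq (α * t)
    + (4 * (α ^ 2 + β ^ 2) * α ^ 2 * β ^ 2) * cos_sq' (β * t)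

theorem hasDerivAt_riccatiS₂ : HasDerivAt (riccatiS₂ α β) (riccatiS₁ α β t) t := by
  have hsh := (hasDerivAt_const_mul (x := t) α).sinh
  have hs := (hasDerivAt_const_mul (x := t) β).sin
  refine (((hs.pow 2).const_mul (α ^ 2)).add ((hsh.pow 2).const_mul (β ^ 2))).const_mul
    (2 * (α ^ 2 + β ^ 2)) |>.congr_deriv ?_
  rw [riccatiS₁]
  ring

theorem riccatiS₁_wronskian :
    riccatiS₁ α β t * riccatiS₀Deriv α β t
        - 8 * (α ^ 2 + β ^ 2) * α ^ 2 * β ^ 2 * (1 + sinh (α * t) ^ 2 - sin (β * t) ^ 2)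
          * riccatiS₀ α β t
      = riccatiS₂ α β t ^ 2 - (α ^ 2 + β ^ 2) ^ 2 * riccatiS₀ α β t ^ 2 := by
  rw [riccatiS₁, riccatiS₀Deriv, riccatiS₂, riccatiS₀]
  linear_combination (16 * (α ^ 2 + β ^ 2) * α ^ 2 * β ^ 4 * sinh (α * t) ^ 2) * cosh_sq (α * t)
    - (16 * (α ^ 2 + β ^ 2) * α ^ 4 * β ^ 2 * sin (β * t) ^ 2) * cos_sq' (β * t)

theorem riccatiS₁_mul_riccatiS₀Deriv_sub_sq :
    riccatiS₁ α β t * riccatiS₀Deriv α β t - riccatiS₂ α β t ^ 2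
      = (α ^ 2 + β ^ 2) * riccatiS₀ α β t * riccatiW α β t := by
  rw [riccatiS₁, riccatiS₀Deriv, riccatiS₂, riccatiS₀, riccatiW]
  linear_combination (16 * (α ^ 2 + β ^ 2) * α ^ 2 * β ^ 4 * sinh (α * t) ^ 2) * cosh_sq (α * t)
    - (16 * (α ^ 2 + β ^ 2) * α ^ 4 * β ^ 2 * sin (β * t) ^ 2) * cos_sq' (β * t)

variable {α β t}

theorem riccatiS₀_pos (hα : 0 < α) (hβ : 0 < β) (ht : 0 < t) : 0 < riccatiS₀ α β t := by
  have hsin : α * |sin (β * t)| ≤ α * (β * t) := by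
    gcongr
    simpa [abs_of_pos (mul_pos hβ ht)] using abs_sin_le_abs (x := β * t)
  have hsinh : β * (α * t) < β * sinh (α * t) := by
    gcongr
    exact self_lt_sinh_iff.2 (mul_pos hα ht)
  have hsq : (α * sin (β * t)) ^ 2 < (β * sinh (α * t)) ^ 2 := by
    rw [sq_lt_sq]
    calc |α * sin (β * t)| = α * |sin (β * t)| := by rw [abs_mul, abs_of_pos hα]
      _ < β * sinh (α * t) := by linarith
      _ ≤ |β * sinh (α * t)| := le_abs_self _
  rw [riccatiS₀]
  nlinarith

theorem harnackMatrix_riccatiS_hasDerivAt_riccati (n : ℕ) {k₁ k₂ : ℝ}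
    (hk₁ : 2 * k₁ = (α ^ 2 + β ^ 2) ^ 2) (hk₂ : k₂ = α ^ 2 - β ^ 2) (hs₀ : riccatiS₀ α β t ≠ 0)
    (i j : Fin n ⊕ Fin n) :
    HasDerivAt (fun τ => harnackMatrix n (riccatiS₀ α β) (riccatiS₁ α β) (riccatiS₂ α β) τ i j)
      ((harnackMatrix n (riccatiS₀ α β) (riccatiS₁ α β) (riccatiS₂ α β) t * Cmat n
        + (Cmat n)ᵀ * harnackMatrix n (riccatiS₀ α β) (riccatiS₁ α β) (riccatiS₂ α β) t
        + harnackMatrix n (riccatiS₀ α β) (riccatiS₁ α β) (riccatiS₂ α β) t * Dmat n *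
            harnackMatrix n (riccatiS₀ α β) (riccatiS₁ α β) (riccatiS₂ α β) t
        - blockDiag n k₁ k₂) i j) t := by
  refine harnackMatrix_hasDerivAt_riccati n hs₀ (hasDerivAt_riccatiS₀ α β t).differentiableAt
    ?_ (hasDerivAt_riccatiS₁ α β t) (hasDerivAt_riccatiS₂ α β t) ?_ i j
  · rw [deriv_riccatiS₀, hk₂]
    exact hasDerivAt_riccatiS₀Deriv α β t
  · rw [deriv_riccatiS₀, hk₁]
    exact riccatiS₁_wronskian α β t

open Topology in
theorem tendsto_inv_harnackMatrix_riccatiS_nhdsGT_zero (n : ℕ) (hα : 0 < α) (hβ : 0 < β)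
    (i j : Fin n ⊕ Fin n) :
    Tendsto (fun t => (harnackMatrix n (riccatiS₀ α β) (riccatiS₁ α β) (riccatiS₂ α β) t)⁻¹ i j)
      (𝓝[>] 0) (𝓝 0) := by
  let T : ℝ → Matrix (Fin n ⊕ Fin n) (Fin n ⊕ Fin n) ℝ := fun t =>
    (-2 / ((α ^ 2 + β ^ 2) * riccatiW α β t)) • fromBlocks (riccatiS₀Deriv α β t • 1)
      (riccatiS₂ α β t • 1) (riccatiS₂ α β t • 1) (riccatiS₁ α β t • 1)
  have hW : Continuous (riccatiW α β) := by unfold riccatiW; fun_prop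
  have hW₀ : riccatiW α β 0 ≠ 0 := by simp [riccatiW, hα.ne', hβ.ne']
  have hT : ContinuousAt T 0 := by
    dsimp only [T, riccatiS₀Deriv, riccatiS₁, riccatiS₂]
    fun_prop (disch := exact mul_ne_zero (by positivity) hW₀)
  have hT₀ : T 0 = 0 := by simp [T, riccatiS₀Deriv, riccatiS₁, riccatiS₂]
  have hinv : ∀ᶠ t in 𝓝[>] 0,
      T t = (harnackMatrix n (riccatiS₀ α β) (riccatiS₁ α β) (riccatiS₂ α β) t)⁻¹ := by
    filter_upwards [self_mem_nhdsWithin,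
      nhdsWithin_le_nhds (hW.continuousAt.eventually_ne hW₀)] with t ht hWt
    have hs₀ := (riccatiS₀_pos hα hβ ht).ne'
    dsimp only [T]
    rw [harnackMatrix_inv n hs₀, deriv_riccatiS₀, riccatiS₁_mul_riccatiS₀Deriv_sub_sq]
    · congr 1
      field_simp
    · rw [deriv_riccatiS₀, riccatiS₁_mul_riccatiS₀Deriv_sub_sq]
      positivity
  have hlim := (hT.tendsto.mono_left nhdsWithin_le_nhds).congr' hinv
  rw [hT₀] at hlim
  exact tendsto_pi_nhds.1 (tendsto_pi_nhds.1 hlim i) j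

end RiccatiModel

section Parameters

variable {k₁ k₂ : ℝ}

theorem abs_lt_sqrt_two_mul (hk : k₂ ^ 2 < 2 * k₁) : |k₂| < √(2 * k₁) :=
  (Real.lt_sqrt (abs_nonneg k₂)).2 (by rwa [sq_abs])

theorem mu1_sq (hk : k₂ ^ 2 < 2 * k₁) : mu1 k₁ k₂ ^ 2 = √(2 * k₁) + k₂ :=
  Real.sq_sqrt (by linarith [(abs_lt.1 (abs_lt_sqrt_two_mul hk)).1])

theorem mu2_sq (hk : k₂ ^ 2 < 2 * k₁) : mu2 k₁ k₂ ^ 2 = √(2 * k₁) - k₂ :=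
  Real.sq_sqrt (by linarith [(abs_lt.1 (abs_lt_sqrt_two_mul hk)).2])

theorem mu1_div_sqrt_two_sq (hk : k₂ ^ 2 < 2 * k₁) :
    (mu1 k₁ k₂ / √2) ^ 2 = (√(2 * k₁) + k₂) / 2 := by
  rw [div_pow, mu1_sq hk, Real.sq_sqrt zero_le_two]

theorem mu2_div_sqrt_two_sq (hk : k₂ ^ 2 < 2 * k₁) :
    (mu2 k₁ k₂ / √2) ^ 2 = (√(2 * k₁) - k₂) / 2 := by
  rw [div_pow, mu2_sq hk, Real.sq_sqrt zero_le_two]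

theorem mu1_pos (hk : k₂ ^ 2 < 2 * k₁) : 0 < mu1 k₁ k₂ :=
  Real.sqrt_pos.2 (by linarith [(abs_lt.1 (abs_lt_sqrt_two_mul hk)).1])

theorem mu2_pos (hk : k₂ ^ 2 < 2 * k₁) : 0 < mu2 k₁ k₂ :=
  Real.sqrt_pos.2 (by linarith [(abs_lt.1 (abs_lt_sqrt_two_mul hk)).2])

theorem s0C_eq_riccatiS₀ (k₁ k₂ : ℝ) :
    s0C k₁ k₂ = riccatiS₀ (mu1 k₁ k₂ / √2) (mu2 k₁ k₂ / √2) := by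
  ext t
  rw [s0C, riccatiS₀, div_pow, div_pow, Real.sq_sqrt zero_le_two]
  ring

theorem s1C_eq_riccatiS₁ (hk : k₂ ^ 2 < 2 * k₁) :
    s1C k₁ k₂ = riccatiS₁ (mu1 k₁ k₂ / √2) (mu2 k₁ k₂ / √2) := by
  ext t
  have hsqrt : √(2 * k₁) = √2 * √k₁ := Real.sqrt_mul zero_le_two k₁
  have h2 : √2 ≠ 0 := by positivity
  rw [s1C, riccatiS₁, mu1_div_sqrt_two_sq hk, mu2_div_sqrt_two_sq hk, hsqrt]
  field_simp
  rw [show √2 ^ 3 = 2 * √2 by rw [pow_succ, Real.sq_sqrt zero_le_two]]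
  ring

theorem s2C_eq_riccatiS₂ (hk : k₂ ^ 2 < 2 * k₁) :
    s2C k₁ k₂ = riccatiS₂ (mu1 k₁ k₂ / √2) (mu2 k₁ k₂ / √2) := by
  ext t
  rw [s2C, riccatiS₂, mu1_div_sqrt_two_sq hk, mu2_div_sqrt_two_sq hk, mu1_sq hk, mu2_sq hk]
  ring

end Parameters

theorem riccati_explicit_case3_general (n : ℕ)
    (k₁ k₂ : ℝ) (hk : k₂ ^ 2 < 2 * k₁) :
    (∀ a b : ℝ, 0 ≤ a → (∀ r ∈ Ioo a b, s0C k₁ k₂ r ≠ 0) → ∀ t ∈ Ioo a b,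
      ∀ i j, HasDerivAt (fun τ => harnackMatrix n (s0C k₁ k₂) (s1C k₁ k₂) (s2C k₁ k₂) τ i j)
        ((harnackMatrix n (s0C k₁ k₂) (s1C k₁ k₂) (s2C k₁ k₂) t * Cmat n
          + (Cmat n)ᵀ * harnackMatrix n (s0C k₁ k₂) (s1C k₁ k₂) (s2C k₁ k₂) t
          + harnackMatrix n (s0C k₁ k₂) (s1C k₁ k₂) (s2C k₁ k₂) t * Dmat n *
              harnackMatrix n (s0C k₁ k₂) (s1C k₁ k₂) (s2C k₁ k₂) t
          - blockDiag n k₁ k₂) i j) t) ∧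
    (∀ i j, Tendsto (fun t => (harnackMatrix n (s0C k₁ k₂) (s1C k₁ k₂) (s2C k₁ k₂) t)⁻¹ i j)
      (nhdsWithin 0 (Ioi 0)) (nhds 0)) := by
  have hσ : (mu1 k₁ k₂ / √2) ^ 2 + (mu2 k₁ k₂ / √2) ^ 2 = √(2 * k₁) := by
    rw [mu1_div_sqrt_two_sq hk, mu2_div_sqrt_two_sq hk]
    ring
  have hk₁ : 2 * k₁ = ((mu1 k₁ k₂ / √2) ^ 2 + (mu2 k₁ k₂ / √2) ^ 2) ^ 2 := by
    rw [hσ, Real.sq_sqrt ((sq_nonneg k₂).trans hk.le)]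
  have hk₂ : k₂ = (mu1 k₁ k₂ / √2) ^ 2 - (mu2 k₁ k₂ / √2) ^ 2 := by
    rw [mu1_div_sqrt_two_sq hk, mu2_div_sqrt_two_sq hk]
    ring
  rw [s0C_eq_riccatiS₀, s1C_eq_riccatiS₁ hk, s2C_eq_riccatiS₂ hk]
  exact ⟨fun a b _ hne t ht ↦ harnackMatrix_riccatiS_hasDerivAt_riccati n hk₁ hk₂ (hne t ht),
    tendsto_inv_harnackMatrix_riccatiS_nhdsGT_zero n (div_pos (mu1_pos hk) (by positivity))
      (div_pos (mu2_pos hk) (by positivity))⟩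

/-- **Explicit solution of the Riccati equation, case `k₂² < 2k₁`** (Lemma 3.3 (3)). -/
theorem riccati_explicit_case3 (n : ℕ) (hn : 1 ≤ n)
    (k₁ k₂ : ℝ) (hk₁ : 0 ≤ k₁) (hk₂ : 0 ≤ k₂) (hk : k₂ ^ 2 < 2 * k₁) :
    (∀ a b : ℝ, 0 ≤ a → (∀ r ∈ Ioo a b, s0C k₁ k₂ r ≠ 0) → ∀ t ∈ Ioo a b,
      ∀ i j, HasDerivAt (fun τ => harnackMatrix n (s0C k₁ k₂) (s1C k₁ k₂) (s2C k₁ k₂) τ i j)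
        ((harnackMatrix n (s0C k₁ k₂) (s1C k₁ k₂) (s2C k₁ k₂) t * Cmat n
          + (Cmat n)ᵀ * harnackMatrix n (s0C k₁ k₂) (s1C k₁ k₂) (s2C k₁ k₂) t
          + harnackMatrix n (s0C k₁ k₂) (s1C k₁ k₂) (s2C k₁ k₂) t * Dmat n *
              harnackMatrix n (s0C k₁ k₂) (s1C k₁ k₂) (s2C k₁ k₂) t
          - blockDiag n k₁ k₂) i j) t) ∧
    (∀ i j, Tendsto (fun t => (harnackMatrix n (s0C k₁ k₂) (s1C k₁ k₂) (s2C k₁ k₂) t)⁻¹ i j)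
      (nhdsWithin 0 (Ioi 0)) (nhds 0)) :=
  riccati_explicit_case3_general n k₁ k₂ hk
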